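/- arXiv:0810.0338 — 2 statements merged into one kernel-verified Lean document; each statement's English description precedes it below -/
import Mathlib

section
/- Let G be a compact topological group, let V be a finite-dimensional real vector space carrying a continuous linear representation ρ of G, let h ∈ G, and let A, B ⊆ V be subspaces with ρ(h)(A) = A, ρ(h)(B) = B, and A + B = V. Then ker(ρ(h) − id_V) = (A ∩ ker(ρ(h) − id_V)) + (B ∩ ker(ρ(h) − id_V)). -/
/-!
If `T` has bounded orbits, no nonzero `T`-fixed vector `v` lies in the range of `T - 1`, since
`v = T u - u` gives `T ^ n u = u + n • v`. Compactness of `G` bounds the orbits of `ρ h`, so in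
finite dimension every `ρ h`-invariant subspace `S` is the sum of its fixed vectors and
`(ρ h - 1) S`. Decomposing along `A ⊔ B = ⊤`, a fixed vector then differs from a sum of fixed
vectors of `A` and `B` by a fixed vector in the range of `ρ h - 1`, which is zero.
-/

open Bornology Submodule LinearMap

section LinearAlgebra

variable {K V : Type*} [Field K] [AddCommGroup V] [Module K V] [FiniteDimensional K V]

theorem LinearMap.sup_ker_range_eq_top_of_disjoint {f : V →ₗ[K] V}
    (hf : Disjoint (ker f) (range f)) : ker f ⊔ range f = ⊤ :=
  eq_top_of_disjoint _ _ (by rw [add_comm, f.finrank_range_add_finrank_ker]) hf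

theorem LinearMap.inf_ker_sup_map_eq_of_disjoint {f : V →ₗ[K] V}
    (hf : Disjoint (ker f) (range f)) {S : Submodule K V} (hS : ∀ x ∈ S, f x ∈ S) :
    S ⊓ ker f ⊔ map f S = S := by
  set g := f.restrict hS
  have hg : Disjoint (ker g) (range g) := by
    rw [ker_restrict, range_restrict, Submodule.disjoint_def]
    intro x hx hx'
    exact Subtype.ext <| (Submodule.disjoint_def.mp hf) _ hx (map_le_range hx')
  have := congrArg (map S.subtype) (sup_ker_range_eq_top_of_disjoint hg)
  rwa [Submodule.map_sup, ker_restrict, range_restrict, map_comap_subtype, map_comap_subtype,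
    map_subtype_top, inf_eq_right.mpr (map_le_iff_le_comap.mpr hS)] at this

theorem LinearMap.ker_eq_inf_ker_sup_inf_ker_of_disjoint {f : V →ₗ[K] V}
    (hf : Disjoint (ker f) (range f)) {A B : Submodule K V} (hA : ∀ x ∈ A, f x ∈ A)
    (hB : ∀ x ∈ B, f x ∈ B) (hAB : A ⊔ B = ⊤) :
    ker f = A ⊓ ker f ⊔ B ⊓ ker f := by
  have hcover : A ⊓ ker f ⊔ B ⊓ ker f ⊔ range f = ⊤ := by
    refine top_le_iff.mp ?_
    calc ⊤ = A ⊓ ker f ⊔ map f A ⊔ (B ⊓ ker f ⊔ map f B) := by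
          rw [inf_ker_sup_map_eq_of_disjoint hf hA, inf_ker_sup_map_eq_of_disjoint hf hB, hAB]
      _ ≤ A ⊓ ker f ⊔ B ⊓ ker f ⊔ range f := by
          rw [sup_sup_sup_comm]
          exact sup_le_sup_left (sup_le map_le_range map_le_range) _
  calc ker f = (A ⊓ ker f ⊔ B ⊓ ker f ⊔ range f) ⊓ ker f := by rw [hcover, top_inf_eq]
    _ = A ⊓ ker f ⊔ B ⊓ ker f := by
      rw [sup_inf_assoc_of_le _ (sup_le inf_le_right inf_le_right), hf.symm.eq_bot, sup_bot_eq]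

end LinearAlgebra

section BoundedOrbits

variable {E : Type*} [NormedAddCommGroup E] [NormedSpace ℝ E]

theorem eq_zero_of_isBounded_range_nsmul {v : E}
    (hv : IsBounded (Set.range fun n : ℕ => n • v)) : v = 0 := by
  obtain ⟨C, hC⟩ := isBounded_iff_forall_norm_le.mp hv
  by_contra hv0
  obtain ⟨n, hn⟩ := exists_nat_gt (C / ‖v‖)
  have hnv := hC _ ⟨n, rfl⟩
  rw [RCLike.norm_nsmul ℝ, nsmul_eq_mul] at hnv
  rw [div_lt_iff₀ (norm_pos_iff.mpr hv0)] at hn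
  linarith

theorem LinearMap.pow_apply_eq_add_nsmul_of_apply_sub_fixed (T : E →ₗ[ℝ] E) {u : E}
    (hfix : T (T u - u) = T u - u) (n : ℕ) : (T ^ n) u = u + n • (T u - u) := by
  induction n with
  | zero => simp
  | succ n ih =>
    rw [pow_succ', Module.End.mul_apply, ih, map_add, map_nsmul, hfix, succ_nsmul]
    abel

theorem LinearMap.disjoint_ker_sub_id_range_sub_id_of_isBounded_orbit (T : E →ₗ[ℝ] E)
    (hT : ∀ u, IsBounded (Set.range fun n : ℕ => (T ^ n) u)) :
    Disjoint (ker (T - LinearMap.id)) (range (T - LinearMap.id)) := by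
  rw [Submodule.disjoint_def]
  rintro _ hv ⟨u, rfl⟩
  have hfix : T (T u - u) = T u - u := sub_eq_zero.mp hv
  refine eq_zero_of_isBounded_range_nsmul
    ((isBounded_sub (hT u) (isBounded_singleton (x := u))).subset ?_)
  rintro _ ⟨n, rfl⟩
  refine ⟨_, ⟨n, rfl⟩, u, rfl, ?_⟩
  show (T ^ n) u - u = n • (T u - u)
  rw [T.pow_apply_eq_add_nsmul_of_apply_sub_fixed hfix, add_sub_cancel_left]

end BoundedOrbits

theorem MonoidHom.isBounded_range_pow_apply {G R E : Type*} [Monoid G] [TopologicalSpace G]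
    [CompactSpace G] [Semiring R] [NormedAddCommGroup E] [Module R E] (ρ : G →* (E →ₗ[R] E))
    (h : G) {u : E} (hu : Continuous fun g => ρ g u) :
    IsBounded (Set.range fun n : ℕ => (ρ h ^ n) u) :=
  (isCompact_range hu).isBounded.subset <| by
    rintro _ ⟨n, rfl⟩
    exact ⟨h ^ n, congrArg (· u) (map_pow ρ h n)⟩

theorem fixed_subspace_eq_sup_of_invariant_general
    (G : Type*) [Group G] [TopologicalSpace G] [CompactSpace G]
    (V : Type*) [NormedAddCommGroup V] [NormedSpace ℝ V] [FiniteDimensional ℝ V]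
    (ρ : G →* (V →ₗ[ℝ] V))
    (hρ : Continuous fun p : G × V => ρ p.1 p.2)
    (h : G) (A B : Submodule ℝ V)
    (hA : Submodule.map (ρ h) A = A) (hB : Submodule.map (ρ h) B = B)
    (hAB : A ⊔ B = ⊤) :
    LinearMap.ker (ρ h - LinearMap.id) =
      (A ⊓ LinearMap.ker (ρ h - LinearMap.id)) ⊔ (B ⊓ LinearMap.ker (ρ h - LinearMap.id)) := by
  have hdisj := (ρ h).disjoint_ker_sub_id_range_sub_id_of_isBounded_orbit fun u =>
    ρ.isBounded_range_pow_apply h (hρ.comp (Continuous.prodMk_left u))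
  have hinv : ∀ S : Submodule ℝ V, S.map (ρ h) = S → ∀ x ∈ S, ρ h x - x ∈ S :=
    fun S hS x hx => S.sub_mem (hS ▸ mem_map_of_mem hx) hx
  exact ker_eq_inf_ker_sup_inf_ker_of_disjoint hdisj (hinv A hA) (hinv B hB) hAB

/-- If `A` and `B` are `h`-invariant subspaces of a finite-dimensional continuous representation
`V` of a compact group with `A + B = V`, then the `h`-fixed subspace of `V` is the sum of the
`h`-fixed vectors in `A` and the `h`-fixed vectors in `B`. -/
theorem fixed_subspace_eq_sup_of_invariant
    (G : Type*) [Group G] [TopologicalSpace G] [IsTopologicalGroup G] [CompactSpace G]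
    (V : Type*) [NormedAddCommGroup V] [NormedSpace ℝ V] [FiniteDimensional ℝ V]
    (ρ : G →* (V →ₗ[ℝ] V))
    (hρ : Continuous fun p : G × V => ρ p.1 p.2)
    (h : G) (A B : Submodule ℝ V)
    (hA : Submodule.map (ρ h) A = A) (hB : Submodule.map (ρ h) B = B)
    (hAB : A ⊔ B = ⊤) :
    LinearMap.ker (ρ h - LinearMap.id) =
      (A ⊓ LinearMap.ker (ρ h - LinearMap.id)) ⊔ (B ⊓ LinearMap.ker (ρ h - LinearMap.id)) :=
  fixed_subspace_eq_sup_of_invariant_general G V ρ hρ h A B hA hB hAB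
end

section
/- Let G be a compact topological group, h ∈ G, and let U and V be finite-dimensional real vector spaces carrying continuous linear representations ρ_U and ρ_V of G. Let φ : U → V be a linear map with φ ∘ ρ_U(h) = ρ_V(h) ∘ φ, and let E ⊆ V be a subspace with ρ(h)(E) = E. If E + range(φ) = V, then ker(ρ_V(h) − id) = (E ∩ ker(ρ_V(h) − id)) + φ(ker(ρ_U(h) − id)). -/
/-! Write `A = ρV h`, `D = A - 1`, `D' = ρU h - 1`. Orbits of a compact group are bounded, and
`Aⁿ w = w + n • (A w - w)` whenever `A w - w` is fixed, so `ker D ⊓ range D = ⊥`; by a dimension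
count every `D`-invariant subspace `E` then splits as `(E ⊓ ker D) ⊔ D E`, and likewise
`U = ker D' ⊔ range D'`. Pushing these splittings through `V = E ⊔ range φ` and using
`φ ∘ D' = D ∘ φ` gives `V = F ⊔ range D`, where `F ≤ ker D` is the right-hand side; the modular law
yields `ker D = F ⊔ (range D ⊓ ker D) = F`. -/

open Submodule LinearMap Module

theorem LinearMap.inf_ker_sup_map_eq_of_disjoint_ker_range {K W : Type*} [DivisionRing K]
    [AddCommGroup W] [Module K W] [FiniteDimensional K W] {D : W →ₗ[K] W}
    (hD : Disjoint (ker D) (range D)) {E : Submodule K W} (hE : E.map D ≤ E) :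
    E ⊓ ker D ⊔ E.map D = E := by
  refine eq_of_le_of_finrank_eq (sup_le inf_le_left hE) ?_
  have hdisj : Disjoint (E ⊓ ker D) (E.map D) := hD.mono inf_le_right map_le_range
  have hker : finrank K (ker (D.domRestrict E)) = finrank K ↥(E ⊓ ker D) := by
    rw [← finrank_map_subtype_eq, ker_domRestrict, map_comap_subtype]
  have hrank := (D.domRestrict E).finrank_range_add_finrank_ker
  have hsup := finrank_sup_add_finrank_inf_eq (E ⊓ ker D) (E.map D)
  rw [range_domRestrict] at hrank
  rw [disjoint_iff.mp hdisj, finrank_bot] at hsup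
  omega

theorem LinearMap.ker_eq_inf_ker_sup_map_ker_of_sup_range_eq_top {K U V : Type*} [DivisionRing K]
    [AddCommGroup U] [Module K U] [FiniteDimensional K U]
    [AddCommGroup V] [Module K V] [FiniteDimensional K V]
    {D' : U →ₗ[K] U} {D : V →ₗ[K] V} (φ : U →ₗ[K] V) (hφ : φ ∘ₗ D' = D ∘ₗ φ)
    (hD' : Disjoint (ker D') (range D')) (hD : Disjoint (ker D) (range D))
    {E : Submodule K V} (hE : E.map D ≤ E) (htrans : E ⊔ range φ = ⊤) :
    ker D = E ⊓ ker D ⊔ (ker D').map φ := by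
  set F := E ⊓ ker D ⊔ (ker D').map φ
  have hF : F ≤ ker D := by
    refine sup_le inf_le_right (map_le_iff_le_comap.mpr ?_)
    rw [← ker_comp, ← hφ]
    exact ker_le_ker_comp D' φ
  have hrange : map φ (range D') ≤ range D := by
    rw [← range_comp, hφ]
    exact range_comp_le_range φ D
  have hcover : ⊤ ≤ F ⊔ range D := by
    have hU : ker D' ⊔ range D' = ⊤ := by
      simpa using inf_ker_sup_map_eq_of_disjoint_ker_range hD' (le_top : map D' ⊤ ≤ ⊤)
    rw [← htrans, ← inf_ker_sup_map_eq_of_disjoint_ker_range hD hE, ← Submodule.map_top, ← hU, Submodule.map_sup]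
    exact sup_le (sup_le (le_sup_left.trans le_sup_left) (map_le_range.trans le_sup_right))
      (sup_le (le_sup_right.trans le_sup_left) (hrange.trans le_sup_right))
  calc ker D = (F ⊔ range D) ⊓ ker D := by rw [top_le_iff.mp hcover, top_inf_eq]
    _ = F ⊔ range D ⊓ ker D := sup_inf_assoc_of_le _ hF
    _ = F := by rw [disjoint_iff.mp hD.symm, sup_bot_eq]

theorem LinearMap.disjoint_ker_sub_id_range_sub_id_of_isBounded_orbit_s5 {W : Type*}
    [NormedAddCommGroup W] [NormedSpace ℝ W] (A : W →ₗ[ℝ] W)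
    (hA : ∀ w, Bornology.IsBounded (Set.range fun n : ℕ => (A ^ n) w)) :
    Disjoint (ker (A - LinearMap.id)) (range (A - LinearMap.id)) := by
  rw [disjoint_def]
  rintro v hv ⟨w, hw⟩
  have hAv : A v = v := by simpa [sub_eq_zero] using hv
  have hAw : A w = w + v := by rw [← hw, sub_apply, id_apply, add_sub_cancel]
  have hpow : ∀ n : ℕ, (A ^ n) w = w + (n : ℝ) • v := by
    intro n
    induction n with
    | zero => simp
    | succ n ih =>
      rw [pow_succ', Module.End.mul_apply, ih, map_add, map_smul, hAv, hAw, Nat.cast_succ,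
        add_smul, one_smul]
      abel
  obtain ⟨C, hC⟩ := isBounded_iff_forall_norm_le.mp (hA w)
  have hgrowth : ∀ n : ℕ, n * ‖v‖ ≤ C + ‖w‖ := fun n => by
    calc n * ‖v‖ = ‖(A ^ n) w - w‖ := by rw [hpow, add_sub_cancel_left, norm_smul, Real.norm_natCast]
      _ ≤ ‖(A ^ n) w‖ + ‖w‖ := norm_sub_le _ _
      _ ≤ C + ‖w‖ := by gcongr; exact hC _ ⟨n, rfl⟩
  by_contra hv0
  obtain ⟨n, hn⟩ := exists_nat_gt ((C + ‖w‖) / ‖v‖)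
  rw [div_lt_iff₀ (norm_pos_iff.mpr hv0)] at hn
  linarith [hgrowth n]

theorem MonoidHom.isBounded_range_pow_apply_of_compactSpace {G R W : Type*} [Monoid G]
    [TopologicalSpace G] [CompactSpace G] [Semiring R] [SeminormedAddCommGroup W] [Module R W]
    (ρ : G →* (W →ₗ[R] W)) (hρ : ∀ w, Continuous fun g => ρ g w) (g : G) (w : W) :
    Bornology.IsBounded (Set.range fun n : ℕ => (ρ g ^ n) w) :=
  (isCompact_range (hρ w)).isBounded.subset <| by
    rintro _ ⟨n, rfl⟩
    exact ⟨g ^ n, by simp only [map_pow]⟩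

theorem fixed_subspace_eq_sup_of_transverse_general
    (G : Type*) [Group G] [TopologicalSpace G] [CompactSpace G]
    (h : G)
    (U V : Type*) [NormedAddCommGroup U] [NormedSpace ℝ U] [FiniteDimensional ℝ U]
    [NormedAddCommGroup V] [NormedSpace ℝ V] [FiniteDimensional ℝ V]
    (ρU : G →* (U →ₗ[ℝ] U)) (ρV : G →* (V →ₗ[ℝ] V))
    (hρU : Continuous fun p : G × U => ρU p.1 p.2)
    (hρV : Continuous fun p : G × V => ρV p.1 p.2)
    (φ : U →ₗ[ℝ] V) (hφ : φ ∘ₗ ρU h = ρV h ∘ₗ φ)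
    (E : Submodule ℝ V) (hE : Submodule.map (ρV h) E = E)
    (htrans : E ⊔ LinearMap.range φ = ⊤) :
    LinearMap.ker (ρV h - LinearMap.id) =
      (E ⊓ LinearMap.ker (ρV h - LinearMap.id)) ⊔
        Submodule.map φ (LinearMap.ker (ρU h - LinearMap.id)) := by
  have hdisjU := disjoint_ker_sub_id_range_sub_id_of_isBounded_orbit_s5 (ρU h)
    (ρU.isBounded_range_pow_apply_of_compactSpace
      (fun u => hρU.comp (continuous_id.prodMk continuous_const)) h)
  have hdisjV := disjoint_ker_sub_id_range_sub_id_of_isBounded_orbit_s5 (ρV h)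
    (ρV.isBounded_range_pow_apply_of_compactSpace
      (fun v => hρV.comp (continuous_id.prodMk continuous_const)) h)
  have hφ' : φ ∘ₗ (ρU h - LinearMap.id) = (ρV h - LinearMap.id) ∘ₗ φ := by
    rw [comp_sub, sub_comp, hφ, comp_id, id_comp]
  have hE' : E.map (ρV h - LinearMap.id) ≤ E := by
    rintro _ ⟨x, hx, rfl⟩
    exact sub_mem (hE ▸ mem_map_of_mem hx) hx
  exact ker_eq_inf_ker_sup_map_ker_of_sup_range_eq_top φ hφ' hdisjU hdisjV hE' htrans

/-- Pointwise form of descent of transversality to fixed-point sets: if `φ : U → V` intertwines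
the action of `h`, `E ⊆ V` is `h`-invariant, and `E + range φ = V`, then the `h`-fixed subspace
of `V` is spanned by the `h`-fixed vectors of `E` together with the images under `φ` of the
`h`-fixed vectors of `U`. -/
theorem fixed_subspace_eq_sup_of_transverse
    (G : Type*) [Group G] [TopologicalSpace G] [IsTopologicalGroup G] [CompactSpace G]
    (h : G)
    (U V : Type*) [NormedAddCommGroup U] [NormedSpace ℝ U] [FiniteDimensional ℝ U]
    [NormedAddCommGroup V] [NormedSpace ℝ V] [FiniteDimensional ℝ V]
    (ρU : G →* (U →ₗ[ℝ] U)) (ρV : G →* (V →ₗ[ℝ] V))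
    (hρU : Continuous fun p : G × U => ρU p.1 p.2)
    (hρV : Continuous fun p : G × V => ρV p.1 p.2)
    (φ : U →ₗ[ℝ] V) (hφ : φ ∘ₗ ρU h = ρV h ∘ₗ φ)
    (E : Submodule ℝ V) (hE : Submodule.map (ρV h) E = E)
    (htrans : E ⊔ LinearMap.range φ = ⊤) :
    LinearMap.ker (ρV h - LinearMap.id) =
      (E ⊓ LinearMap.ker (ρV h - LinearMap.id)) ⊔
        Submodule.map φ (LinearMap.ker (ρU h - LinearMap.id)) :=
  fixed_subspace_eq_sup_of_transverse_general G h U V ρU ρV hρU hρV φ hφ E hE htrans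
end
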